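/- For every finite simple graph G and every set X ⊆ V(G), the following are equivalent: (1) X is a clique transversal of G; (2) for every clique C of the induced subgraph G − X (i.e., every clique of G disjoint from X), there exists a vertex x ∈ X such that C ⊆ N_G(x); (3) for every clique C of G − X with |C| ≤ |X|, there exists a vertex x ∈ X such that C ⊆ N_G(x). -/

import Mathlib

/-! A clique `C` disjoint from `X` extends to a maximal clique, which meets `X` in a vertex
adjacent to all of `C`; conversely, a common neighbour in `X` of a maximal clique avoiding `X`
would enlarge it. For (3), if no vertex of `X` dominates `C`, picking one non-neighbour in `C`
for each vertex of `X` gives a subclique of size at most `|X|` that no vertex of `X` dominates. -/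

open Finset
open scoped Classical

variable {V : Type*} [Fintype V] [DecidableEq V]

/-- A hypergraph on vertex set `V` is given by its finite set of hyperedges `E`;
the condition that every vertex belongs to at least one hyperedge. -/
def Covers (E : Finset (Finset V)) : Prop := ∀ v : V, ∃ e ∈ E, v ∈ e

/-- A hypergraph is Sperner if no hyperedge is contained in another hyperedge. -/
def SpernerHG (E : Finset (Finset V)) : Prop := ∀ e ∈ E, ∀ f ∈ E, e ⊆ f → e = f

/-- A transversal of a hypergraph: a set of vertices intersecting all hyperedges. -/
def IsTransversal (E : Finset (Finset V)) (T : Finset V) : Prop := ∀ e ∈ E, (e ∩ T).Nonempty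

/-- A minimal transversal: a transversal not properly containing another transversal. -/
def IsMinTransversal (E : Finset (Finset V)) (T : Finset V) : Prop :=
  IsTransversal E T ∧ ∀ T' ⊆ T, IsTransversal E T' → T' = T

/-- The dual hypergraph: its hyperedges are exactly the minimal transversals. -/
noncomputable def dualHG (E : Finset (Finset V)) : Finset (Finset V) :=
  Finset.univ.filter fun T => IsMinTransversal E T

/-- The co-occurrence graph of a hypergraph: two distinct vertices are adjacent
iff some hyperedge contains both. -/
def coocGraph (E : Finset (Finset V)) : SimpleGraph V where
  Adj u v := u ≠ v ∧ ∃ e ∈ E, u ∈ e ∧ v ∈ e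
  symm := by
    refine ⟨?_⟩
    rintro u v ⟨huv, e, he, hu, hv⟩
    exact ⟨Ne.symm huv, e, he, hv, hu⟩
  loopless := by
    refine ⟨?_⟩
    rintro v ⟨hv, -⟩
    exact hv rfl

/-- A maximal clique of a graph: a clique not properly contained in any other clique. -/
def IsMaxClique (G : SimpleGraph V) (C : Finset V) : Prop :=
  G.IsClique (C : Set V) ∧ ∀ D : Finset V, G.IsClique (D : Set V) → C ⊆ D → D = C

/-- A hypergraph is conformal if every maximal clique of its co-occurrence graph
is a hyperedge. -/
def ConformalHG (E : Finset (Finset V)) : Prop :=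
  ∀ C : Finset V, IsMaxClique (coocGraph E) C → C ∈ E

/-- A hypergraph is dually conformal if its dual hypergraph is conformal. -/
def DuallyConformalHG (E : Finset (Finset V)) : Prop :=
  ConformalHG (dualHG E)

/-- A clique transversal of a graph: a set of vertices meeting all maximal cliques. -/
def IsCliqueTransversal (G : SimpleGraph V) (X : Finset V) : Prop :=
  ∀ C : Finset V, IsMaxClique G C → (C ∩ X).Nonempty

/-- A minimal clique transversal: a clique transversal not properly containing
another clique transversal. -/
def IsMinCliqueTransversal (G : SimpleGraph V) (X : Finset V) : Prop :=
  IsCliqueTransversal G X ∧ ∀ Y ⊆ X, IsCliqueTransversal G Y → Y = X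

/-- The upper clique transversal number: the maximum size of a minimal clique
transversal. -/
noncomputable def uct (G : SimpleGraph V) : ℕ :=
  (Finset.univ.filter fun X : Finset V => IsMinCliqueTransversal G X).sup Finset.card

theorem exists_forall_of_forall_subset_card_le {α β : Type*} {r : α → β → Prop} {t : Finset α}
    {s : Finset β} (h : ∀ s' ⊆ s, #s' ≤ #t → ∃ x ∈ t, ∀ v ∈ s', r x v) :
    ∃ x ∈ t, ∀ v ∈ s, r x v := by
  by_contra! hcon
  choose w hws hwr using hcon
  set W := t.attach.image fun x => w x.1 x.2
  have hWs : W ⊆ s := by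
    simp only [W, subset_iff, mem_image, mem_attach, true_and]
    rintro _ ⟨x, rfl⟩
    exact hws x.1 x.2
  obtain ⟨x, hxt, hxW⟩ := h W hWs (card_image_le.trans card_attach.le)
  exact hwr x hxt (hxW _ (mem_image_of_mem _ (mem_attach t ⟨x, hxt⟩)))

section

variable {α : Type*} {G : SimpleGraph α}

theorem exists_isMaxClique_superset [Finite α] {C : Finset α} (hC : G.IsClique (C : Set α)) :
    ∃ D, C ⊆ D ∧ IsMaxClique G D := by
  obtain ⟨D, hCD, hD⟩ :=
    Finite.exists_le_maximal (p := fun D : Finset α => G.IsClique (D : Set α)) hC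
  exact ⟨D, hCD, hD.1, fun E hE hDE => (hD.2 hE hDE).antisymm hDE⟩

theorem IsMaxClique.mem_of_forall_adj {C : Finset α} (hC : IsMaxClique G C) {x : α}
    (hx : ∀ v ∈ C, G.Adj x v) : x ∈ C := by
  have hxC : G.IsClique (insert x C : Finset α) := by
    rw [coe_insert]
    exact hC.1.insert fun v hv _ => hx v hv
  rw [← hC.2 _ hxC (subset_insert x C)]
  exact mem_insert_self x C

theorem isCliqueTransversal_iff_forall_isClique_disjoint [Finite α] [DecidableEq α]
    {X : Finset α} :
    IsCliqueTransversal G X ↔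
      ∀ C : Finset α, G.IsClique (C : Set α) → Disjoint C X → ∃ x ∈ X, ∀ v ∈ C, G.Adj x v := by
  constructor
  · intro hX C hC hCX
    obtain ⟨D, hCD, hD⟩ := exists_isMaxClique_superset hC
    obtain ⟨x, hx⟩ := hX D hD
    obtain ⟨hxD, hxX⟩ := mem_inter.1 hx
    exact ⟨x, hxX, fun v hv => hD.1 hxD (hCD hv) fun hxv => disjoint_left.1 hCX (hxv ▸ hv) hxX⟩
  · intro h C hC
    rw [← not_disjoint_iff_nonempty_inter]
    intro hCX
    obtain ⟨x, hxX, hx⟩ := h C hC.1 hCX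
    exact disjoint_left.1 hCX (hC.mem_of_forall_adj hx) hxX

end

/-- TFAE: (1) `X` is a clique transversal of `G`;
(2) every clique of `G` disjoint from `X` is contained in the neighborhood of some
vertex of `X`; (3) the same restricted to cliques of size at most `|X|`. -/
theorem clique_transversal_tfae (G : SimpleGraph V) (X : Finset V) :
    List.TFAE [IsCliqueTransversal G X,
      ∀ C : Finset V, G.IsClique (C : Set V) → Disjoint C X →
        ∃ x ∈ X, ∀ v ∈ C, G.Adj x v,
      ∀ C : Finset V, G.IsClique (C : Set V) → Disjoint C X → C.card ≤ X.card →
        ∃ x ∈ X, ∀ v ∈ C, G.Adj x v] := by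
  tfae_have 1 ↔ 2 := isCliqueTransversal_iff_forall_isClique_disjoint
  tfae_have 2 ↔ 3 := by
    refine ⟨fun h C hC hCX _ => h C hC hCX, fun h C hC hCX => ?_⟩
    exact exists_forall_of_forall_subset_card_le fun C' hC' hcard =>
      h C' (hC.subset (coe_subset.mpr hC')) (hCX.mono_left hC') hcard
  tfae_finish
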